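/- Assume that for every i ∈ 𝐈 there exist constants ρ^i > 0 and X*_i > x*_i such that h_i(x) = ρ^i · (x − x*_i)⁺ for all x < X*_i (i.e., each h_i is linear in a neighbourhood of x*_i). Then there exists T > 0 such that the mapping F is nondecreasing on [0,T): for all 0 ≤ t ≤ t̃ < T and all i ∈ 𝐈, F_i(t) ≤ F_i(t̃). -/

import Mathlib

/-- The set of indices at which `a` attains its minimum. -/
noncomputable def argminSet {n : ℕ} (a : Fin n → ℝ) : Finset (Fin n) :=
  Finset.univ.filter (fun i => ∀ j, a i ≤ a j)

/-- The minimum entry of `a`. -/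
noncomputable def minval {n : ℕ} (a : Fin n → ℝ) : ℝ := ⨅ i, a i

/-- The restriction of `a` to the indices in `S`, reindexed by `Fin S.card`
in increasing order. -/
noncomputable def restrictVec {n : ℕ} (S : Finset (Fin n)) (a : Fin n → ℝ) :
    Fin S.card → ℝ :=
  fun i => a (S.orderIsoOfFin rfl i).1

/-- The "min-sensitive" partial order `⪕` on `ℝⁿ` (Definition 1 of the paper):
for `n = 1` it is the usual order; for `n ≥ 2`, `a ⪕ b` iff (i) `a = b`, or
(ii) `min a < min b`, or (iii) `min a = min b` and `Argmin b ⊊ Argmin a`, or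
(iv) `min a = min b`, `Argmin a = Argmin b ⊊ {1,...,n}` and the restrictions
of `a` and `b` to the complement of the common argmin set are related. -/
noncomputable def msLE : (n : ℕ) → (Fin n → ℝ) → (Fin n → ℝ) → Prop
  | 0, _, _ => True
  | 1, a, b => a 0 ≤ b 0
  | n + 2, a, b =>
    a = b ∨
    minval a < minval b ∨
    (minval a = minval b ∧ argminSet b ⊂ argminSet a) ∨
    (minval a = minval b ∧ argminSet a = argminSet b ∧ argminSet a ⊂ Finset.univ ∧
      msLE ((argminSet a)ᶜ).card (restrictVec (argminSet a)ᶜ a) (restrictVec (argminSet a)ᶜ b))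
termination_by n => n
decreasing_by
  have hne : (argminSet a).Nonempty := by
    obtain ⟨i, -, hi⟩ := Finset.exists_min_image Finset.univ a ⟨0, Finset.mem_univ 0⟩
    refine ⟨i, ?_⟩
    unfold argminSet
    exact Finset.mem_filter.mpr ⟨Finset.mem_univ i, fun j => hi j (Finset.mem_univ j)⟩
  have h1 : 0 < (argminSet a).card := Finset.card_pos.mpr hne
  have h2 : ((argminSet a)ᶜ).card = Fintype.card (Fin (n + 2)) - (argminSet a).card :=
    Finset.card_compl _
  simp only [Fintype.card_fin] at h2
  omega

/-- `x*_i`: the supremum of the zero set of a function. -/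
noncomputable def xstar (f : ℝ → ℝ) : ℝ := sSup {x | f x = 0}

/-- The admissible set `A_t`. -/
def admissible (I J : ℕ) (h : Fin I → ℝ → ℝ) (G : Fin J → Finset (Fin I)) (t : ℝ) :
    Set (Fin I → ℝ) :=
  {a | (∀ i, a i ≤ t) ∧ ∀ j, (∑ i ∈ G j, h i (a i)) ≤ t}

/-- `F` is the `⪕`-greatest element of `A_t`. -/
def IsGreatestMS (I J : ℕ) (h : Fin I → ℝ → ℝ) (G : Fin J → Finset (Fin I)) (t : ℝ)
    (F : Fin I → ℝ) : Prop :=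
  F ∈ admissible I J h G t ∧ ∀ a ∈ admissible I J h G t, msLE I a F

/-!
For small budgets `t` no admissible point leaves the region where every `h i` is the ramp
`ρ i (x - x*_i)⁺`, so `A_t` is the admissible set of the ramp model, whose greatest element lies in
the tube `x* ≤ a ≤ x* + t / ρ`. The homothety centred at `x*` with ratio `t' / t` maps the ramp
constraints at budget `t` onto those at budget `t'`; as long as the tubes around distinct levels
`x*_i` are disjoint it also preserves `⪕`. Comparing `F t'` with the stretched copy of `F t` both
ways gives `F t' = x* + (t' / t) (F t - x*) ≥ F t`.
-/

open Filter Topology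

section MinSensitiveOrder

variable {n : ℕ}

lemma minval_le (a : Fin n → ℝ) (i : Fin n) : minval a ≤ a i :=
  ciInf_le (Set.finite_range a).bddBelow i

lemma mem_argminSet {a : Fin n → ℝ} {i : Fin n} : i ∈ argminSet a ↔ ∀ j, a i ≤ a j := by
  simp [argminSet]

lemma mem_argminSet_iff_eq_minval {a : Fin n → ℝ} {i : Fin n} :
    i ∈ argminSet a ↔ a i = minval a := by
  have : Nonempty (Fin n) := ⟨i⟩
  exact ⟨fun hi => le_antisymm (le_ciInf (mem_argminSet.mp hi)) (minval_le a i),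
    fun hi => mem_argminSet.mpr fun j => hi ▸ minval_le a j⟩

lemma argminSet_nonempty [NeZero n] (a : Fin n → ℝ) : (argminSet a).Nonempty := by
  obtain ⟨i, -, hi⟩ := Finset.exists_min_image Finset.univ a Finset.univ_nonempty
  exact ⟨i, mem_argminSet.mpr fun j => hi j (Finset.mem_univ j)⟩

lemma card_compl_argminSet_lt [NeZero n] (a : Fin n → ℝ) : (argminSet a)ᶜ.card < n := by
  simpa using (argminSet a).card_compl_lt_iff_nonempty.mpr (argminSet_nonempty a)

lemma minval_le_minval_iff [NeZero n] (a b : Fin n → ℝ) :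
    minval a ≤ minval b ↔ ∃ i, ∀ j, a i ≤ b j := by
  constructor
  · intro hab
    obtain ⟨i, hi⟩ := argminSet_nonempty a
    exact ⟨i, fun j => (mem_argminSet_iff_eq_minval.mp hi ▸ hab).trans (minval_le b j)⟩
  · rintro ⟨i, hi⟩
    exact (minval_le a i).trans (le_ciInf hi)

lemma exists_orderIsoOfFin_eq (S : Finset (Fin n)) {k : Fin n} (hk : k ∈ S) :
    ∃ i : Fin S.card, (S.orderIsoOfFin rfl i).1 = k := by
  obtain ⟨i, hi⟩ := (S.orderIsoOfFin rfl).surjective ⟨k, hk⟩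
  exact ⟨i, by rw [hi]⟩

lemma msLE_of_le : ∀ (n : ℕ) (a b : Fin n → ℝ), a ≤ b → msLE n a b := by
  intro n
  induction n using Nat.strong_induction_on with
  | _ n IH =>
    match n with
    | 0 => intro a b _; rw [msLE.eq_1]; trivial
    | 1 => intro a b hab; rw [msLE.eq_2]; exact hab 0
    | m + 2 =>
      intro a b hab
      rw [msLE.eq_3]
      by_cases heq : a = b
      · exact Or.inl heq
      have hmin : minval a ≤ minval b :=
        (minval_le_minval_iff a b).mpr <| by
          obtain ⟨i, hi⟩ := argminSet_nonempty b
          exact ⟨i, fun j => (hab i).trans (mem_argminSet.mp hi j)⟩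
      rcases hmin.lt_or_eq with hlt | hmeq
      · exact Or.inr (Or.inl hlt)
      have hsub : argminSet b ⊆ argminSet a := fun i hi =>
        mem_argminSet_iff_eq_minval.mpr <| le_antisymm
          (hmeq ▸ mem_argminSet_iff_eq_minval.mp hi ▸ hab i) (minval_le a i)
      rcases hsub.ssubset_or_eq with hss | hset
      · exact Or.inr (Or.inr (Or.inl ⟨hmeq, hss⟩))
      have huniv : argminSet a ≠ Finset.univ := fun huniv => heq <| funext fun i => by
        have hia : i ∈ argminSet a := huniv ▸ Finset.mem_univ i
        have hib : i ∈ argminSet b := hset ▸ hia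
        rw [mem_argminSet_iff_eq_minval.mp hia, mem_argminSet_iff_eq_minval.mp hib, hmeq]
      exact Or.inr (Or.inr (Or.inr ⟨hmeq, hset.symm, Finset.ssubset_univ_iff.mpr huniv,
        IH _ (card_compl_argminSet_lt a) _ _ fun i => hab _⟩))

lemma msLE_antisymm : ∀ (n : ℕ) (a b : Fin n → ℝ), msLE n a b → msLE n b a → a = b := by
  intro n
  induction n using Nat.strong_induction_on with
  | _ n IH =>
    match n with
    | 0 => intro a b _ _; exact funext fun i => i.elim0
    | 1 =>
      intro a b hab hba
      rw [msLE.eq_2] at hab hba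
      exact funext fun i => Subsingleton.elim i 0 ▸ le_antisymm hab hba
    | m + 2 =>
      intro a b hab hba
      rw [msLE.eq_3] at hab hba
      rcases hab with rfl | hlt | ⟨hmin, hss⟩ | ⟨hmin, hset, -, hres⟩ <;>
        rcases hba with hba | hlt' | ⟨hmin', hss'⟩ | ⟨hmin', hset', -, hres'⟩
      all_goals first
        | rfl | exact hba.symm | (exfalso; linarith)
        | exact (ssubset_asymm hss hss').elim | exact (hss.ne hset').elim
        | exact (hss'.ne hset).elim | skip
      rw [← hset] at hres'
      have hres := congrFun (IH _ (card_compl_argminSet_lt a) _ _ hres hres')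
      funext i
      by_cases hi : i ∈ argminSet a
      · have hib : i ∈ argminSet b := hset ▸ hi
        rw [mem_argminSet_iff_eq_minval.mp hi, mem_argminSet_iff_eq_minval.mp hib, hmin]
      · obtain ⟨k, hk⟩ := exists_orderIsoOfFin_eq _ (Finset.mem_compl.mpr hi)
        simpa [restrictVec, hk] using hres k

lemma msLE_transfer : ∀ (n : ℕ) (a b a' b' : Fin n → ℝ),
    (∀ i j, a i ≤ a j ↔ a' i ≤ a' j) →
    (∀ i j, b i ≤ b j ↔ b' i ≤ b' j) →
    (∀ i j, a i ≤ b j ↔ a' i ≤ b' j) →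
    (∀ i j, b i ≤ a j ↔ b' i ≤ a' j) →
    msLE n a b → msLE n a' b' := by
  intro n
  induction n using Nat.strong_induction_on with
  | _ n IH =>
    match n with
    | 0 => intros; rw [msLE.eq_1]; trivial
    | 1 =>
      intro a b a' b' _ _ hab _ h
      rw [msLE.eq_2] at h ⊢; exact (hab 0 0).1 h
    | m + 2 =>
      intro a b a' b' Ha Hb Hab Hba h
      have hargA : argminSet a' = argminSet a := by
        ext i; simp only [mem_argminSet, Ha]
      have hargB : argminSet b' = argminSet b := by
        ext i; simp only [mem_argminSet, Hb]
      have hle : minval a ≤ minval b ↔ minval a' ≤ minval b' := by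
        simp only [minval_le_minval_iff, Hab]
      have hge : minval b ≤ minval a ↔ minval b' ≤ minval a' := by
        simp only [minval_le_minval_iff, Hba]
      have hlt : minval a < minval b ↔ minval a' < minval b' := by
        simp only [lt_iff_not_ge, hge]
      have heq : minval a = minval b ↔ minval a' = minval b' := by
        simp only [le_antisymm_iff, hle, hge]
      rw [msLE.eq_3] at h ⊢
      rw [hargA, hargB, ← hlt, ← heq]
      rcases h with h | h | h | ⟨hmin, hset, hproper, hrec⟩
      · left; funext i
        exact le_antisymm ((Hab i i).1 (congrFun h i).le) ((Hba i i).1 (congrFun h i).ge)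
      · exact Or.inr (Or.inl h)
      · exact Or.inr (Or.inr (Or.inl h))
      · exact Or.inr (Or.inr (Or.inr ⟨hmin, hset, hproper,
          IH _ (card_compl_argminSet_lt a) _ _ _ _ (fun i j => Ha _ _) (fun i j => Hb _ _)
            (fun i j => Hab _ _) (fun i j => Hba _ _) hrec⟩))

end MinSensitiveOrder

section Tube

variable {ι : Type*} (c ρ : ι → ℝ)

lemma homothety_apply_apply (μ : ℝ) (a : ι → ℝ) (k : ι) :
    AffineMap.homothety c μ a k = c k + μ * (a k - c k) := by
  simp [AffineMap.homothety_apply, add_comm]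

def tube (s : ℝ) : Set (ι → ℝ) :=
  Set.univ.pi fun k => Set.Icc (c k) (c k + s / ρ k)

variable {c ρ}

lemma tube_mono (hρ : ∀ k, 0 ≤ ρ k) {s s' : ℝ} (hss' : s ≤ s') : tube c ρ s ⊆ tube c ρ s' :=
  Set.pi_mono fun k _ => Set.Icc_subset_Icc_right <| by gcongr; exact hρ k

lemma homothety_mem_tube {μ s : ℝ} (hμ : 0 ≤ μ) {a : ι → ℝ} (ha : a ∈ tube c ρ s) :
    AffineMap.homothety c μ a ∈ tube c ρ (μ * s) := by
  intro k _
  obtain ⟨hlo, hhi⟩ := ha k trivial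
  dsimp only
  rw [homothety_apply_apply, mul_div_assoc]
  constructor <;> nlinarith [mul_le_mul_of_nonneg_left (sub_le_iff_le_add'.mpr hhi) hμ]

lemma lt_of_mem_tube (hρ : ∀ k, 0 < ρ k) {s : ℝ} {a b : ι → ℝ} (ha : a ∈ tube c ρ s)
    (hb : b ∈ tube c ρ s) {i k : ι} (hsep : s < ρ i * (c k - c i)) :
    a i < b k :=
  calc a i ≤ c i + s / ρ i := (ha i trivial).2
    _ < c k := by linarith [(div_lt_iff₀' (hρ i)).2 hsep]
    _ ≤ b k := (hb k trivial).1

/-- While the tubes around distinct levels `c i < c k` are disjoint, a homothety centred at `c`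
moves every entry inside its own tube, so it cannot change how two entries compare. -/
lemma le_iff_homothety_le (hρ : ∀ k, 0 < ρ k) {s μ : ℝ} (hμ : 0 < μ)
    (hsep : ∀ i k, c i < c k → s < ρ i * (c k - c i)) {a b : ι → ℝ}
    (ha : a ∈ tube c ρ s) (hb : b ∈ tube c ρ s)
    (ha' : AffineMap.homothety c μ a ∈ tube c ρ s) (hb' : AffineMap.homothety c μ b ∈ tube c ρ s)
    (i k : ι) : a i ≤ b k ↔ AffineMap.homothety c μ a i ≤ AffineMap.homothety c μ b k := by
  rcases lt_trichotomy (c i) (c k) with hik | hik | hik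
  · exact iff_of_true (lt_of_mem_tube hρ ha hb (hsep i k hik)).le
      (lt_of_mem_tube hρ ha' hb' (hsep i k hik)).le
  · rw [homothety_apply_apply, homothety_apply_apply, hik, add_le_add_iff_left,
      mul_le_mul_iff_right₀ hμ, sub_le_sub_iff_right]
  · exact iff_of_false (lt_of_mem_tube hρ hb ha (hsep k i hik)).not_ge
      (lt_of_mem_tube hρ hb' ha' (hsep k i hik)).not_ge

end Tube

lemma msLE_homothety {n : ℕ} {c ρ : Fin n → ℝ} (hρ : ∀ k, 0 < ρ k) {s μ : ℝ} (hμ : 0 < μ)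
    (hsep : ∀ i k, c i < c k → s < ρ i * (c k - c i)) {a b : Fin n → ℝ}
    (ha : a ∈ tube c ρ s) (hb : b ∈ tube c ρ s)
    (ha' : AffineMap.homothety c μ a ∈ tube c ρ s) (hb' : AffineMap.homothety c μ b ∈ tube c ρ s)
    (hab : msLE n a b) : msLE n (AffineMap.homothety c μ a) (AffineMap.homothety c μ b) :=
  msLE_transfer n a b _ _ (le_iff_homothety_le hρ hμ hsep ha ha ha' ha')
    (le_iff_homothety_le hρ hμ hsep hb hb hb' hb') (le_iff_homothety_le hρ hμ hsep ha hb ha' hb')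
    (le_iff_homothety_le hρ hμ hsep hb ha hb' ha') hab

section Ramp

variable {ι : Type*} (c ρ : ι → ℝ)

def ramp (i : ι) (x : ℝ) : ℝ := ρ i * max (x - c i) 0

variable {c ρ}

lemma ramp_nonneg (hρ : ∀ k, 0 < ρ k) (i : ι) (x : ℝ) : 0 ≤ ramp c ρ i x :=
  mul_nonneg (hρ i).le (le_max_right _ _)

lemma ramp_mono (hρ : ∀ k, 0 < ρ k) (i : ι) : Monotone (ramp c ρ i) := fun _ _ hxy =>
  mul_le_mul_of_nonneg_left (max_le_max_right 0 (sub_le_sub_right hxy _)) (hρ i).le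

lemma ramp_max_self (i : ι) (x : ℝ) : ramp c ρ i (max x (c i)) = ramp c ρ i x := by
  simp [ramp, ← max_sub_sub_right]

lemma ramp_homothety {μ : ℝ} (hμ : 0 ≤ μ) (a : ι → ℝ) (i : ι) :
    ramp c ρ i (AffineMap.homothety c μ a i) = μ * ramp c ρ i (a i) := by
  rw [ramp, ramp, homothety_apply_apply, add_sub_cancel_left, mul_left_comm,
    mul_max_of_nonneg _ _ hμ, mul_zero]

lemma le_add_div_of_ramp_le {i : ι} (hρ : 0 < ρ i) {x s : ℝ} (hx : ramp c ρ i x ≤ s) :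
    x ≤ c i + s / ρ i := by
  have : ρ i * (x - c i) ≤ s := (mul_le_mul_of_nonneg_left (le_max_left _ _) hρ.le).trans hx
  linarith [(le_div_iff₀' hρ).2 this]

end Ramp

lemma lt_of_apply_le {f : ℝ → ℝ} (hf : Monotone f) {c ρ X s a : ℝ} (hρ : 0 < ρ)
    (hlin : ∀ x < X, f x = ρ * max (x - c) 0) (hs : s < ρ * (X - c)) (ha : f a ≤ s) : a < X := by
  by_contra! hXa
  obtain ⟨y, hy, hyX⟩ := exists_between (show c + s / ρ < X by linarith [(div_lt_iff₀' hρ).2 hs])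
  have hsy : s < ρ * (y - c) := (div_lt_iff₀' hρ).1 (by linarith)
  linarith [hf (hyX.le.trans hXa), hlin y hyX,
    mul_le_mul_of_nonneg_left (le_max_left (y - c) 0) hρ.le]

section Admissible

variable {I J : ℕ} {G : Fin J → Finset (Fin I)} {c ρ : Fin I → ℝ} {s : ℝ}

lemma apply_le_of_mem_admissible {h : Fin I → ℝ → ℝ} (hnonneg : ∀ i x, 0 ≤ h i x)
    (hcover : ∀ i, ∃ j, i ∈ G j) {a : Fin I → ℝ} (ha : a ∈ admissible I J h G s) (k : Fin I) :
    h k (a k) ≤ s := by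
  obtain ⟨j, hj⟩ := hcover k
  exact (Finset.single_le_sum (fun i _ => hnonneg i (a i)) hj).trans (ha.2 j)

lemma lt_of_mem_admissible {h : Fin I → ℝ → ℝ} {X : Fin I → ℝ} (hρ : ∀ i, 0 < ρ i)
    (hnonneg : ∀ i x, 0 ≤ h i x) (hmono : ∀ i, Monotone (h i)) (hcover : ∀ i, ∃ j, i ∈ G j)
    (hlin : ∀ i, ∀ x < X i, h i x = ramp c ρ i x) (hs : ∀ i, s < ρ i * (X i - c i))
    {a : Fin I → ℝ} (ha : a ∈ admissible I J h G s) (i : Fin I) : a i < X i :=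
  lt_of_apply_le (hmono i) (hρ i) (hlin i) (hs i) (apply_le_of_mem_admissible hnonneg hcover ha i)

lemma admissible_eq_admissible_ramp {h : Fin I → ℝ → ℝ} {X : Fin I → ℝ} (hρ : ∀ i, 0 < ρ i)
    (hnonneg : ∀ i x, 0 ≤ h i x) (hmono : ∀ i, Monotone (h i)) (hcover : ∀ i, ∃ j, i ∈ G j)
    (hlin : ∀ i, ∀ x < X i, h i x = ramp c ρ i x) (hs : ∀ i, s < ρ i * (X i - c i)) :
    admissible I J h G s = admissible I J (ramp c ρ) G s := by
  ext a
  have hsum (haX : ∀ i, a i < X i) (j : Fin J) :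
      ∑ i ∈ G j, h i (a i) = ∑ i ∈ G j, ramp c ρ i (a i) :=
    Finset.sum_congr rfl fun i _ => hlin i _ (haX i)
  constructor
  · intro ha
    exact ⟨ha.1, fun j =>
      hsum (lt_of_mem_admissible hρ hnonneg hmono hcover hlin hs ha) j ▸ ha.2 j⟩
  · intro ha
    exact ⟨ha.1, fun j => (hsum (lt_of_mem_admissible hρ (ramp_nonneg hρ) (ramp_mono hρ) hcover
      (fun _ _ _ => rfl) hs ha) j).symm ▸ ha.2 j⟩

lemma homothety_mem_admissible_ramp {μ : ℝ} (hμ : 0 ≤ μ) {a : Fin I → ℝ}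
    (ha : a ∈ admissible I J (ramp c ρ) G s)
    (hle : ∀ k, AffineMap.homothety c μ a k ≤ μ * s) :
    AffineMap.homothety c μ a ∈ admissible I J (ramp c ρ) G (μ * s) :=
  ⟨hle, fun j => by
    simpa only [ramp_homothety hμ, ← Finset.mul_sum] using mul_le_mul_of_nonneg_left (ha.2 j) hμ⟩

lemma homothety_mem_admissible_ramp_of_le_one (hc : ∀ i, c i ≤ 0) {μ : ℝ} (hμ0 : 0 ≤ μ)
    (hμ1 : μ ≤ 1) {a : Fin I → ℝ} (ha : a ∈ admissible I J (ramp c ρ) G s) :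
    AffineMap.homothety c μ a ∈ admissible I J (ramp c ρ) G (μ * s) :=
  homothety_mem_admissible_ramp hμ0 ha fun k => by
    rw [homothety_apply_apply]
    linarith [mul_le_mul_of_nonneg_left (ha.1 k) hμ0,
      mul_nonpos_of_nonneg_of_nonpos (sub_nonneg.2 hμ1) (hc k)]

/-- Below a negative level `c k` the stretched tube stays below `0 ≤ μ s`; at the level `0`
the constraint `a k ≤ s` simply scales. -/
lemma homothety_mem_admissible_ramp_of_mem_tube (hρ : ∀ i, 0 < ρ i) (hc : ∀ i, c i ≤ 0)
    {μ : ℝ} (hμ : 0 ≤ μ) (hs : 0 ≤ s) (hneg : ∀ k, c k < 0 → μ * s < ρ k * -c k)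
    {a : Fin I → ℝ} (ha : a ∈ admissible I J (ramp c ρ) G s) (hat : a ∈ tube c ρ s) :
    AffineMap.homothety c μ a ∈ admissible I J (ramp c ρ) G (μ * s) :=
  homothety_mem_admissible_ramp hμ ha fun k => by
    rcases (hc k).lt_or_eq with hck | hck
    · linarith [(homothety_mem_tube hμ hat k trivial).2, (div_lt_iff₀' (hρ k)).2 (hneg k hck),
        mul_nonneg hμ hs]
    · rw [homothety_apply_apply, hck, zero_add, sub_zero]
      exact mul_le_mul_of_nonneg_left (ha.1 k) hμ

/-- `max F c` is admissible and dominates `F`, hence equals it. -/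
lemma IsGreatestMS.le_of_ramp {F : Fin I → ℝ} (hF : IsGreatestMS I J (ramp c ρ) G s F)
    (hs : 0 ≤ s) (hc : ∀ i, c i ≤ 0) : c ≤ F := by
  have hmax : (fun k => max (F k) (c k)) ∈ admissible I J (ramp c ρ) G s :=
    ⟨fun k => max_le (hF.1.1 k) ((hc k).trans hs), fun j => by
      simpa only [ramp_max_self] using hF.1.2 j⟩
  have hF_eq := msLE_antisymm I _ _ (msLE_of_le I _ _ fun k => le_max_left _ _) (hF.2 _ hmax)
  exact fun k => (le_max_right _ _).trans (congrFun hF_eq k).ge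

lemma IsGreatestMS.mem_tube_of_ramp (hρ : ∀ i, 0 < ρ i) (hcover : ∀ i, ∃ j, i ∈ G j)
    {F : Fin I → ℝ} (hF : IsGreatestMS I J (ramp c ρ) G s F) (hs : 0 ≤ s)
    (hc : ∀ i, c i ≤ 0) : F ∈ tube c ρ s := fun k _ =>
  ⟨hF.le_of_ramp hs hc k,
    le_add_div_of_ramp_le (hρ k) (apply_le_of_mem_admissible (ramp_nonneg hρ) hcover hF.1 k)⟩

end Admissible

section RampModel

variable {I J : ℕ} {G : Fin J → Finset (Fin I)} {c ρ : Fin I → ℝ} {t t' : ℝ}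
  {F F' : Fin I → ℝ}

/-- Rescaling `F'` down to budget `t` gives a competitor of `F`; rescaling back, the order
between them is preserved, so `F'` is dominated by the admissible stretched copy of `F`. -/
theorem IsGreatestMS.ramp_eq_homothety (hρ : ∀ i, 0 < ρ i) (hc : ∀ i, c i ≤ 0)
    (hcover : ∀ i, ∃ j, i ∈ G j) (ht : 0 < t) (htt' : t ≤ t')
    (hsep : ∀ i k, c i < c k → t' < ρ i * (c k - c i)) (hneg : ∀ k, c k < 0 → t' < ρ k * -c k)
    (hF : IsGreatestMS I J (ramp c ρ) G t F) (hF' : IsGreatestMS I J (ramp c ρ) G t' F') :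
    F' = AffineMap.homothety c (t' / t) F := by
  have ht' : 0 < t' := ht.trans_le htt'
  have hμ : 0 < t' / t := div_pos ht' ht
  have hup : t' / t * t = t' := div_mul_cancel₀ t' ht.ne'
  have hdown : t / t' * t' = t := div_mul_cancel₀ t ht'.ne'
  have hinv : t' / t * (t / t') = 1 := by field_simp
  have hFt : F ∈ tube c ρ t := hF.mem_tube_of_ramp hρ hcover ht.le hc
  have hF't' : F' ∈ tube c ρ t' := hF'.mem_tube_of_ramp hρ hcover ht'.le hc
  set W := AffineMap.homothety c (t / t') F'
  have hW : W ∈ admissible I J (ramp c ρ) G t := hdown ▸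
    homothety_mem_admissible_ramp_of_le_one hc (div_nonneg ht.le ht'.le)
      ((div_le_one ht').2 htt') hF'.1
  have hWt : W ∈ tube c ρ t := hdown ▸ homothety_mem_tube (div_nonneg ht.le ht'.le) hF't'
  have hμW : AffineMap.homothety c (t' / t) W = F' := by
    rw [← AffineMap.homothety_mul_apply, hinv, AffineMap.homothety_one, AffineMap.id_apply]
  have hV : AffineMap.homothety c (t' / t) F ∈ admissible I J (ramp c ρ) G t' := by
    have := homothety_mem_admissible_ramp_of_mem_tube hρ hc hμ.le ht.le
      (fun k hk => hup.symm ▸ hneg k hk) hF.1 hFt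
    rwa [hup] at this
  have hVt' : AffineMap.homothety c (t' / t) F ∈ tube c ρ t' := by
    have := homothety_mem_tube hμ.le hFt
    rwa [hup] at this
  have htube := tube_mono (c := c) (fun k => (hρ k).le) htt'
  have hF'V : msLE I F' (AffineMap.homothety c (t' / t) F) := hμW ▸
    msLE_homothety hρ hμ hsep (htube hWt) (htube hFt) (hμW ▸ hF't') hVt' (hF.2 W hW)
  exact msLE_antisymm I _ _ hF'V (hF'.2 _ hV)

theorem IsGreatestMS.ramp_le (hρ : ∀ i, 0 < ρ i) (hc : ∀ i, c i ≤ 0)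
    (hcover : ∀ i, ∃ j, i ∈ G j) (ht : 0 ≤ t) (htt' : t ≤ t')
    (hsep : ∀ i k, c i < c k → t' < ρ i * (c k - c i)) (hneg : ∀ k, c k < 0 → t' < ρ k * -c k)
    (hF : IsGreatestMS I J (ramp c ρ) G t F) (hF' : IsGreatestMS I J (ramp c ρ) G t' F') :
    F ≤ F' := by
  intro k
  have hcF : c k ≤ F k := hF.le_of_ramp ht hc k
  rcases ht.lt_or_eq with ht | rfl
  · rw [hF.ramp_eq_homothety hρ hc hcover ht htt' hsep hneg hF', homothety_apply_apply]
    nlinarith [(one_le_div ht).2 htt']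
  · have hFc := (hF.mem_tube_of_ramp hρ hcover le_rfl hc k trivial).2
    rw [zero_div, add_zero] at hFc
    exact hFc.trans (hF'.le_of_ramp htt' hc k)

end RampModel

/-- Below `T` admissible points stay where `h` is linear, the tubes around distinct levels are
disjoint, and the tubes around negative levels stay below `0`. -/
lemma exists_pos_threshold {ι : Type*} [Finite ι] (c ρ X : ι → ℝ) (hρ : ∀ i, 0 < ρ i)
    (hX : ∀ i, c i < X i) :
    ∃ T, 0 < T ∧ (∀ i, T ≤ ρ i * (X i - c i)) ∧
      (∀ i k, c i < c k → T ≤ ρ i * (c k - c i)) ∧ (∀ k, c k < 0 → T ≤ ρ k * -c k) := by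
  have hsmall {b : ℝ} (hb : 0 < b) : ∀ᶠ T in 𝓝[>] (0 : ℝ), T ≤ b :=
    nhdsWithin_le_nhds ((eventually_lt_nhds hb).mono fun _ => le_of_lt)
  have hev : ∀ᶠ T in 𝓝[>] (0 : ℝ), 0 < T ∧ (∀ i, T ≤ ρ i * (X i - c i)) ∧
      (∀ i k, c i < c k → T ≤ ρ i * (c k - c i)) ∧ (∀ k, c k < 0 → T ≤ ρ k * -c k) :=
    eventually_mem_nhdsWithin.and <|
      (eventually_all.2 fun i => hsmall (mul_pos (hρ i) (sub_pos.2 (hX i)))).and <|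
      (eventually_all.2 fun i => eventually_all.2 fun k => eventually_imp_distrib_left.2
        fun hik => hsmall (mul_pos (hρ i) (sub_pos.2 hik))).and <|
      eventually_all.2 fun k => eventually_imp_distrib_left.2
        fun hk => hsmall (mul_pos (hρ k) (neg_pos.2 hk))
  exact hev.exists

theorem F_locally_monotone_piecewise_linear_general
    (I J : ℕ)
    (h : Fin I → ℝ → ℝ)
    (hnonneg : ∀ i x, 0 ≤ h i x)
    (hmono : ∀ i, Monotone (h i))
    (hxle : ∀ i, xstar (h i) ≤ 0)
    (G : Fin J → Finset (Fin I))
    (hGcover : ∀ i, ∃ j, i ∈ G j)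
    (ρ Xs : Fin I → ℝ)
    (hρ : ∀ i, 0 < ρ i)
    (hXs : ∀ i, xstar (h i) < Xs i)
    (hlin : ∀ i, ∀ x : ℝ, x < Xs i → h i x = ρ i * max (x - xstar (h i)) 0)
    (F : ℝ → Fin I → ℝ)
    (hF : ∀ t : ℝ, 0 ≤ t → IsGreatestMS I J h G t (F t)) :
    ∃ T : ℝ, 0 < T ∧
      ∀ t t' : ℝ, 0 ≤ t → t ≤ t' → t' < T → ∀ i, F t i ≤ F t' i := by
  set c : Fin I → ℝ := fun i => xstar (h i)
  obtain ⟨T, hT, hTX, hTsep, hTneg⟩ := exists_pos_threshold c ρ Xs hρ hXs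
  refine ⟨T, hT, fun t t' ht htt' ht'T => ?_⟩
  have hramp {s : ℝ} (hs : 0 ≤ s) (hst' : s ≤ t') : IsGreatestMS I J (ramp c ρ) G s (F s) := by
    rw [IsGreatestMS, ← admissible_eq_admissible_ramp hρ hnonneg hmono hGcover hlin
      fun i => (hst'.trans_lt ht'T).trans_le (hTX i)]
    exact hF s hs
  exact IsGreatestMS.ramp_le hρ hxle hGcover ht htt'
    (fun i k hik => ht'T.trans_le (hTsep i k hik)) (fun k hk => ht'T.trans_le (hTneg k hk))
    (hramp ht htt') (hramp (ht.trans htt') le_rfl)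

/-- if each `h_i` is of the form `ρ_i (x - x*_i)⁺` in a neighbourhood
`(-∞, X*_i)` of `x*_i` (with `ρ_i > 0`, `X*_i > x*_i`), then the mapping `F` is
nondecreasing on some interval `[0, T)`, `T > 0`. -/
theorem F_locally_monotone_piecewise_linear
    (I J : ℕ) (hI : 0 < I) (hJ : 0 < J)
    (h : Fin I → ℝ → ℝ)
    (hcont : ∀ i, Continuous (h i))
    (hnonneg : ∀ i x, 0 ≤ h i x)
    (hmono : ∀ i, Monotone (h i))
    (htop : ∀ i, Filter.Tendsto (h i) Filter.atTop Filter.atTop)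
    (hzero : ∀ i, ∃ x, h i x = 0)
    (hxle : ∀ i, xstar (h i) ≤ 0)
    (G : Fin J → Finset (Fin I))
    (hGinj : Function.Injective G)
    (hGne : ∀ j, (G j).Nonempty)
    (hGcover : ∀ i, ∃ j, i ∈ G j)
    (ρ Xs : Fin I → ℝ)
    (hρ : ∀ i, 0 < ρ i)
    (hXs : ∀ i, xstar (h i) < Xs i)
    (hlin : ∀ i, ∀ x : ℝ, x < Xs i → h i x = ρ i * max (x - xstar (h i)) 0)
    (F : ℝ → Fin I → ℝ)
    (hF : ∀ t : ℝ, 0 ≤ t → IsGreatestMS I J h G t (F t)) :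
    ∃ T : ℝ, 0 < T ∧
      ∀ t t' : ℝ, 0 ≤ t → t ≤ t' → t' < T → ∀ i, F t i ≤ F t' i :=
  F_locally_monotone_piecewise_linear_general I J h hnonneg hmono hxle G hGcover ρ Xs hρ hXs hlin F
    hF
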